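/- Let (S_G, M_G) be a quantum graph on M_n(ℂ) and (S_H, M_H) a quantum graph on M_m(ℂ). Set M_K = M_G ⊗ M_H (the unital star-subalgebra of M_{nm}(ℂ) spanned by Kronecker products of elements of M_G and M_H) and S_K = S_G ⊗ S_H (categorical product). Then (S_K, M_K) is a quantum graph on M_{nm}(ℂ): S_K is a ℂ-linear subspace closed under conjugate transpose, A X B ∈ S_K for all A, B in the commutant M_K' of M_K in M_{nm}(ℂ) and all X ∈ S_K, and Tr(X Aᴴ) = 0 for all X ∈ S_K and A ∈ M_K'. -/

import Mathlib

open Matrix Kronecker BigOperators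

noncomputable section

/-- The commutant of a set of matrices in `M_I(ℂ)`. -/
def commutant {I : Type*} [Fintype I] (M : Set (Matrix I I ℂ)) : Set (Matrix I I ℂ) :=
  {Y | ∀ A ∈ M, Y * A = A * Y}

/-- The ℂ-linear span of Kronecker products `v ⊗ₖ w` with `v ∈ V`, `w ∈ W`. -/
def tensorSpan {I J : Type*} [Fintype I] [Fintype J]
    (V : Set (Matrix I I ℂ)) (W : Set (Matrix J J ℂ)) :
    Submodule ℂ (Matrix (I × J) (I × J) ℂ) :=
  Submodule.span ℂ {x | ∃ v ∈ V, ∃ w ∈ W, x = v ⊗ₖ w}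

/-- A pair `(S, M)` is a quantum graph: `S` is closed under conjugate transpose, is a
bimodule over the commutant of `M`, and is trace-orthogonal to the commutant of `M`. -/
def IsQuantumGraph {I : Type*} [Fintype I]
    (S : Submodule ℂ (Matrix I I ℂ)) (M : Set (Matrix I I ℂ)) : Prop :=
  (∀ X ∈ S, Xᴴ ∈ S) ∧
  (∀ A ∈ commutant M, ∀ B ∈ commutant M, ∀ X ∈ S, A * X * B ∈ S) ∧
  (∀ X ∈ S, ∀ A ∈ commutant M, Matrix.trace (X * Aᴴ) = 0)

/-- Product of the matrices `P a`, `a ∈ T`, taken in increasing order of indices. -/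
def finsetProd {β : Type*} [Monoid β] {c : ℕ} (P : Fin c → β) (T : Finset (Fin c)) : β :=
  ((T.sort (· ≤ ·)).map P).prod

/-- A quantum `c`-coloring of `(S, M)` (with auxiliary algebra `M_k(ℂ)`). -/
def IsQColoring {I : Type*} [Fintype I] [DecidableEq I] {c k : ℕ}
    (S : Submodule ℂ (Matrix I I ℂ)) (M : Set (Matrix I I ℂ))
    (P : Fin c → Matrix (I × Fin k) (I × Fin k) ℂ) : Prop :=
  (∀ a, P a ∈ tensorSpan M (Set.univ : Set (Matrix (Fin k) (Fin k) ℂ))) ∧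
  (∀ a, (P a)ᴴ = P a) ∧
  (∀ a, P a * P a = P a) ∧
  ((∑ a, P a) = 1) ∧
  (∀ X ∈ S, ∀ a, P a * (X ⊗ₖ (1 : Matrix (Fin k) (Fin k) ℂ)) * P a = 0)

def HasQColoring {I : Type*} [Fintype I] [DecidableEq I]
    (S : Submodule ℂ (Matrix I I ℂ)) (M : Set (Matrix I I ℂ)) (c : ℕ) : Prop :=
  ∃ k : ℕ, 1 ≤ k ∧ ∃ P : Fin c → Matrix (I × Fin k) (I × Fin k) ℂ, IsQColoring S M P

/-- The quantum chromatic number `χ_q(S, M) ∈ ℕ∞`. -/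
def qChrom {I : Type*} [Fintype I] [DecidableEq I]
    (S : Submodule ℂ (Matrix I I ℂ)) (M : Set (Matrix I I ℂ)) : ℕ∞ :=
  ⨅ (c : ℕ) (_ : HasQColoring S M c), (c : ℕ∞)

/-- A quantum `b`-fold coloring of `(S, M)` using `c` colors
(with auxiliary algebra `M_k(ℂ)`). -/
def IsQBFoldColoring {I : Type*} [Fintype I] [DecidableEq I] {c k : ℕ}
    (S : Submodule ℂ (Matrix I I ℂ)) (M : Set (Matrix I I ℂ)) (b : ℕ)
    (P : Fin c → Matrix (I × Fin k) (I × Fin k) ℂ) : Prop :=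
  (∀ a, P a ∈ tensorSpan M (Set.univ : Set (Matrix (Fin k) (Fin k) ℂ))) ∧
  (∀ a a', P a * P a' = P a' * P a) ∧
  (∀ a, (P a)ᴴ = P a) ∧
  (∀ a, P a * P a = P a) ∧
  ((∑ T ∈ Finset.univ.powersetCard b, finsetProd P T) = 1) ∧
  (∀ X ∈ S, ∀ a, P a * (X ⊗ₖ (1 : Matrix (Fin k) (Fin k) ℂ)) * P a = 0)

def HasQBFoldColoring {I : Type*} [Fintype I] [DecidableEq I]
    (S : Submodule ℂ (Matrix I I ℂ)) (M : Set (Matrix I I ℂ)) (b c : ℕ) : Prop :=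
  ∃ k : ℕ, 1 ≤ k ∧ ∃ P : Fin c → Matrix (I × Fin k) (I × Fin k) ℂ, IsQBFoldColoring S M b P

/-- The quantum `b`-fold chromatic number `χ_{b,q}(S, M) ∈ ℕ∞`. -/
def qbChrom {I : Type*} [Fintype I] [DecidableEq I]
    (S : Submodule ℂ (Matrix I I ℂ)) (M : Set (Matrix I I ℂ)) (b : ℕ) : ℕ∞ :=
  ⨅ (c : ℕ) (_ : HasQBFoldColoring S M b c), (c : ℕ∞)

/-- A local `b`-fold coloring of `(S, M)` using `c` colors (projections in `M` itself). -/
def IsLocalBFoldColoring {I : Type*} [Fintype I] [DecidableEq I] {c : ℕ}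
    (S : Submodule ℂ (Matrix I I ℂ)) (M : Set (Matrix I I ℂ)) (b : ℕ)
    (P : Fin c → Matrix I I ℂ) : Prop :=
  (∀ a, P a ∈ M) ∧
  (∀ a a', P a * P a' = P a' * P a) ∧
  (∀ a, (P a)ᴴ = P a) ∧
  (∀ a, P a * P a = P a) ∧
  ((∑ T ∈ Finset.univ.powersetCard b, finsetProd P T) = 1) ∧
  (∀ X ∈ S, ∀ a, P a * X * P a = 0)

def HasLocalBFoldColoring {I : Type*} [Fintype I] [DecidableEq I]
    (S : Submodule ℂ (Matrix I I ℂ)) (M : Set (Matrix I I ℂ)) (b c : ℕ) : Prop :=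
  ∃ P : Fin c → Matrix I I ℂ, IsLocalBFoldColoring S M b P

/-- The local `b`-fold chromatic number. -/
def localBChrom {I : Type*} [Fintype I] [DecidableEq I]
    (S : Submodule ℂ (Matrix I I ℂ)) (M : Set (Matrix I I ℂ)) (b : ℕ) : ℕ∞ :=
  ⨅ (c : ℕ) (_ : HasLocalBFoldColoring S M b c), (c : ℕ∞)

/-- `S_G`: span of matrix units on edges of a simple graph. -/
def graphSpan {V : Type*} [Fintype V] [DecidableEq V] (G : SimpleGraph V) :
    Submodule ℂ (Matrix V V ℂ) :=
  Submodule.span ℂ {x | ∃ v w, G.Adj v w ∧ x = Matrix.single v w 1}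

/-- The partial trace over the first tensor factor. -/
def ptrace {I J : Type*} [Fintype I] (P : Matrix (I × J) (I × J) ℂ) : Matrix J J ℂ :=
  Matrix.of fun p q => ∑ i, P (i, p) (i, q)

/-- The complete quantum graph operator space: everything trace-orthogonal to `M'`. -/
def completeS {I : Type*} [Fintype I] (M : Set (Matrix I I ℂ)) :
    Submodule ℂ (Matrix I I ℂ) where
  carrier := {X | ∀ A ∈ commutant M, Matrix.trace (X * Aᴴ) = 0}
  add_mem' := by
    intro x y hx hy A hA
    rw [Set.mem_setOf_eq] at *
    rw [Matrix.add_mul, Matrix.trace_add, hx A hA, hy A hA, add_zero]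
  zero_mem' := by
    intro A hA
    rw [Matrix.zero_mul, Matrix.trace_zero]
  smul_mem' := by
    intro r x hx A hA
    rw [Set.mem_setOf_eq] at *
    rw [Matrix.smul_mul, Matrix.trace_smul, hx A hA, smul_zero]

/-!
An element `Y` of the commutant of `M_G ⊗ M_H` commutes with `M_G ⊗ 1`, so each block
`Y_{jl} = (Y (i, j) (i', l))_{i i'}` lies in `M_G'`. Expanding the blocks in a basis `(f_k)` of
`M_G'` gives `Y = ∑ₖ f_k ⊗ C_k`, and since `Y` also commutes with `1 ⊗ M_H` and the coordinate
functionals are linear, every `C_k` lies in `M_H'`. Hence `(M_G ⊗ M_H)' ⊆ M_G' ⊗ M_H'`, and the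
three axioms for `S_G ⊗ S_H` reduce to Kronecker generators, where
`(a ⊗ c) (x ⊗ y) (b ⊗ d) = a x b ⊗ c y d`, `(x ⊗ y)ᴴ = xᴴ ⊗ yᴴ` and
`Tr ((x ⊗ y) (a ⊗ c)ᴴ) = Tr (x aᴴ) Tr (y cᴴ)`.
-/

section TensorSpan

variable {I J : Type*} [Fintype I] [Fintype J]

lemma kronecker_mem_tensorSpan {V : Set (Matrix I I ℂ)} {W : Set (Matrix J J ℂ)}
    {v : Matrix I I ℂ} {w : Matrix J J ℂ} (hv : v ∈ V) (hw : w ∈ W) :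
    v ⊗ₖ w ∈ tensorSpan V W :=
  Submodule.subset_span ⟨v, hv, w, hw, rfl⟩

lemma conjTranspose_mem_tensorSpan {V : Set (Matrix I I ℂ)} {W : Set (Matrix J J ℂ)}
    (hV : ∀ v ∈ V, vᴴ ∈ V) (hW : ∀ w ∈ W, wᴴ ∈ W) {X : Matrix (I × J) (I × J) ℂ}
    (hX : X ∈ tensorSpan V W) : Xᴴ ∈ tensorSpan V W := by
  induction hX using Submodule.span_induction with
  | mem _ hx =>
    obtain ⟨v, hv, w, hw, rfl⟩ := hx
    rw [conjTranspose_kronecker]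
    exact kronecker_mem_tensorSpan (hV v hv) (hW w hw)
  | zero => simp
  | add _ _ _ _ hx hy => rw [conjTranspose_add]; exact add_mem hx hy
  | smul _ _ _ hx => rw [conjTranspose_smul]; exact Submodule.smul_mem _ _ hx

lemma mul_mul_mem_tensorSpan {C S : Set (Matrix I I ℂ)} {D T : Set (Matrix J J ℂ)}
    (hS : ∀ a ∈ C, ∀ b ∈ C, ∀ x ∈ S, a * x * b ∈ S)
    (hT : ∀ c ∈ D, ∀ d ∈ D, ∀ y ∈ T, c * y * d ∈ T)
    {A B X : Matrix (I × J) (I × J) ℂ} (hA : A ∈ tensorSpan C D) (hB : B ∈ tensorSpan C D)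
    (hX : X ∈ tensorSpan S T) : A * X * B ∈ tensorSpan S T := by
  -- products of submodules need the ring `Matrix (I × J) (I × J) ℂ`, hence decidable equality
  classical
  have hAXB : A * X * B ∈ tensorSpan C D * tensorSpan S T * tensorSpan C D :=
    Submodule.mul_mem_mul (Submodule.mul_mem_mul hA hX) hB
  rw [tensorSpan, tensorSpan, Submodule.span_mul_span, Submodule.span_mul_span] at hAXB
  refine Submodule.span_le.mpr ?_ hAXB
  rintro _ ⟨_, ⟨_, ⟨a, ha, c, hc, rfl⟩, _, ⟨x, hx, y, hy, rfl⟩, rfl⟩, _, ⟨b, hb, d, hd, rfl⟩, rfl⟩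
  dsimp only
  rw [← mul_kronecker_mul, ← mul_kronecker_mul]
  exact kronecker_mem_tensorSpan (hS a ha b hb x hx) (hT c hc d hd y hy)

lemma trace_mul_conjTranspose_eq_zero_of_mem_tensorSpan {S C : Set (Matrix I I ℂ)}
    {T D : Set (Matrix J J ℂ)} (hS : ∀ x ∈ S, ∀ a ∈ C, trace (x * aᴴ) = 0)
    {X A : Matrix (I × J) (I × J) ℂ} (hX : X ∈ tensorSpan S T) (hA : A ∈ tensorSpan C D) :
    trace (X * Aᴴ) = 0 := by
  induction hX, hA using Submodule.span_induction₂ with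
  | mem_mem _ _ hx ha =>
    obtain ⟨x, hx, y, -, rfl⟩ := hx
    obtain ⟨a, ha, c, -, rfl⟩ := ha
    rw [conjTranspose_kronecker, ← mul_kronecker_mul, trace_kronecker, hS x hx a ha, zero_mul]
  | zero_left => simp
  | zero_right => simp
  | add_left _ _ _ _ _ _ h₁ h₂ => rw [add_mul, trace_add, h₁, h₂, add_zero]
  | add_right _ _ _ _ _ _ h₁ h₂ => rw [conjTranspose_add, mul_add, trace_add, h₁, h₂, add_zero]
  | smul_left _ _ _ _ _ h => rw [smul_mul_assoc, trace_smul, h, smul_zero]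
  | smul_right _ _ _ _ _ h => rw [conjTranspose_smul, mul_smul_comm, trace_smul, h, smul_zero]

end TensorSpan

section KroneckerBlock

variable {I J : Type*}

def kroneckerBlock (Y : Matrix (I × J) (I × J) ℂ) (j l : J) : Matrix I I ℂ :=
  of fun i i' => Y (i, j) (i', l)

variable (Y : Matrix (I × J) (I × J) ℂ) (j l : J)

lemma kroneckerBlock_mul_kronecker_one [Fintype I] [Fintype J] [DecidableEq J] (v : Matrix I I ℂ) :
    kroneckerBlock (Y * (v ⊗ₖ 1)) j l = kroneckerBlock Y j l * v := by
  ext i i'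
  simp [kroneckerBlock, mul_apply, Fintype.sum_prod_type, one_apply]

lemma kroneckerBlock_kronecker_one_mul [Fintype I] [Fintype J] [DecidableEq J] (v : Matrix I I ℂ) :
    kroneckerBlock ((v ⊗ₖ 1) * Y) j l = v * kroneckerBlock Y j l := by
  ext i i'
  simp [kroneckerBlock, mul_apply, Fintype.sum_prod_type, one_apply]

lemma kroneckerBlock_mul_one_kronecker [Fintype I] [Fintype J] [DecidableEq I]
    (w : Matrix J J ℂ) :
    kroneckerBlock (Y * (1 ⊗ₖ w)) j l = ∑ q, w q l • kroneckerBlock Y j q := by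
  ext i i'
  simp [kroneckerBlock, mul_apply, Fintype.sum_prod_type, one_apply, Matrix.sum_apply, mul_comm]

lemma kroneckerBlock_one_kronecker_mul [Fintype I] [Fintype J] [DecidableEq I]
    (w : Matrix J J ℂ) :
    kroneckerBlock ((1 ⊗ₖ w) * Y) j l = ∑ q, w j q • kroneckerBlock Y q l := by
  ext i i'
  simp [kroneckerBlock, mul_apply, Fintype.sum_prod_type, one_apply, Matrix.sum_apply]

lemma eq_sum_kronecker_of_kroneckerBlock {ι : Type*} [Fintype ι] (f : ι → Matrix I I ℂ)
    (c : ι → Matrix J J ℂ) (h : ∀ j l, kroneckerBlock Y j l = ∑ k, c k j l • f k) :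
    Y = ∑ k, f k ⊗ₖ c k := by
  ext ⟨i, j⟩ ⟨i', l⟩
  have := congrFun (congrFun (h j l) i) i'
  simpa [kroneckerBlock, Matrix.sum_apply, mul_comm] using this

end KroneckerBlock

lemma commutant_eq_centralizer {I : Type*} [Fintype I] (M : Set (Matrix I I ℂ)) :
    commutant M = Set.centralizer M :=
  Set.ext fun _ => forall₂_congr fun _ _ => eq_comm

lemma commutant_tensorSpan_subset {I J : Type*} [Fintype I] [Fintype J] [DecidableEq I]
    [DecidableEq J] {MG : Set (Matrix I I ℂ)} {MH : Set (Matrix J J ℂ)} (hG : 1 ∈ MG)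
    (hH : 1 ∈ MH) :
    commutant (tensorSpan MG MH : Set (Matrix (I × J) (I × J) ℂ)) ⊆
      tensorSpan (commutant MG) (commutant MH) := by
  intro Y hYcomm
  let U := Subalgebra.centralizer ℂ MG
  have hblock (j l : J) : kroneckerBlock Y j l ∈ U := fun v hv => by
    rw [← kroneckerBlock_kronecker_one_mul, ← kroneckerBlock_mul_kronecker_one,
      hYcomm _ (kronecker_mem_tensorSpan hv hH)]
  let B (j l : J) : U := ⟨_, hblock j l⟩
  let b := Module.finBasis ℂ U
  let c (k : Fin (Module.finrank ℂ U)) : Matrix J J ℂ := of fun j l => b.repr (B j l) k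
  have hc (k : Fin (Module.finrank ℂ U)) : c k ∈ commutant MH := by
    intro w hw
    have hBw (j l : J) : ∑ q, w q l • B j q = ∑ q, w j q • B q l := Subtype.ext <| by
      simpa [B, kroneckerBlock_mul_one_kronecker, kroneckerBlock_one_kronecker_mul] using
        congrArg (kroneckerBlock · j l) (hYcomm _ (kronecker_mem_tensorSpan hG hw))
    ext j l
    simpa [c, mul_apply, mul_comm] using congrArg (fun x => b.repr x k) (hBw j l)
  have hY_eq : Y = ∑ k, (b k : Matrix I I ℂ) ⊗ₖ c k :=
    eq_sum_kronecker_of_kroneckerBlock Y _ _ fun j l =>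
      (congrArg Subtype.val (b.sum_repr (B j l))).symm.trans
        (AddSubmonoidClass.coe_finsetSum _ _)
  rw [hY_eq]
  exact Submodule.sum_mem _ fun k _ =>
    kronecker_mem_tensorSpan ((commutant_eq_centralizer MG).symm ▸ (b k).2) (hc k)

theorem categoricalProduct_isQuantumGraph {n m : ℕ}
    (SG : Submodule ℂ (Matrix (Fin n) (Fin n) ℂ))
    (MG : StarSubalgebra ℂ (Matrix (Fin n) (Fin n) ℂ))
    (SH : Submodule ℂ (Matrix (Fin m) (Fin m) ℂ))
    (MH : StarSubalgebra ℂ (Matrix (Fin m) (Fin m) ℂ))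
    (hG : IsQuantumGraph SG (MG : Set (Matrix (Fin n) (Fin n) ℂ)))
    (hH : IsQuantumGraph SH (MH : Set (Matrix (Fin m) (Fin m) ℂ))) :
    IsQuantumGraph (tensorSpan (SG : Set (Matrix (Fin n) (Fin n) ℂ)) (SH : Set (Matrix (Fin m) (Fin m) ℂ))) ((tensorSpan (MG : Set (Matrix (Fin n) (Fin n) ℂ)) (MH : Set (Matrix (Fin m) (Fin m) ℂ)) : Submodule ℂ (Matrix (Fin n × Fin m) (Fin n × Fin m) ℂ)) : Set (Matrix (Fin n × Fin m) (Fin n × Fin m) ℂ)) := by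
  have hcomm := commutant_tensorSpan_subset MG.one_mem MH.one_mem
  exact ⟨fun X hX => conjTranspose_mem_tensorSpan hG.1 hH.1 hX,
    fun A hA B hB X hX => mul_mul_mem_tensorSpan hG.2.1 hH.2.1 (hcomm hA) (hcomm hB) hX,
    fun X hX A hA => trace_mul_conjTranspose_eq_zero_of_mem_tensorSpan hG.2.2 hX (hcomm hA)⟩

end
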